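/- Let Θ̂ be a symmetric m×m matrix with spectral decomposition Θ̂ = U D Uᵀ, D = diag(λ₁ ≤ … ≤ λ_m), λ₁ < 0, and let Θ be symmetric positive semidefinite. Define Θ̂₊ = U D₊ Uᵀ with D₊ = diag(max(λ_i, ε)) for some 0 < ε ≤ -λ₁. Then ‖Θ̂₊ - Θ‖₂ ≤ 3‖Θ̂ - Θ‖₂. -/

import Mathlib

open Matrix
open scoped Matrix.Norms.L2Operator

/-- The ℓ₂ → ℓ₂ operator (spectral) norm of a real square matrix. -/
noncomputable def opNorm {m : ℕ} (M : Matrix (Fin m) (Fin m) ℝ) : ℝ :=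
  ‖Matrix.toEuclideanCLM (𝕜 := ℝ) M‖

/-!
Conjugating by `U` reduces everything to the diagonal matrix `D = diag λ` and the positive
semidefinite matrix `P = Uᵀ Θ U`. Since `P₁₁ ≥ 0`, the `(1,1)` entry of `P - D` is at least
`-λ₁`, so `-λ₁ ≤ ‖Θ̂ - Θ‖`. The correction `Θ̂₊ - Θ̂ = U diag(max(λᵢ, ε) - λᵢ) Uᵀ` has entries in
`[0, ε - λ₁] ⊆ [0, -2λ₁]`, and the triangle inequality gives `‖Θ̂₊ - Θ‖ ≤ -2λ₁ + ‖Θ̂ - Θ‖`.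
-/

namespace Matrix

open scoped ComplexOrder

variable {𝕜 m n : Type*} [RCLike 𝕜] [Fintype m] [Fintype n] [DecidableEq n]

theorem norm_apply_le_l2_opNorm (A : Matrix m n 𝕜) (i : m) (j : n) : ‖A i j‖ ≤ ‖A‖ := by
  have h := A.l2_opNorm_mulVec (EuclideanSpace.single j 1)
  rw [PiLp.norm_single, norm_one, mul_one] at h
  refine le_trans (le_of_eq ?_) ((PiLp.norm_apply_le _ i).trans h)
  simp [mulVec_single]

theorem neg_re_apply_self_le_l2_opNorm_sub {A P : Matrix n n 𝕜} (hP : P.PosSemidef) (i : n) :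
    -RCLike.re (A i i) ≤ ‖A - P‖ :=
  calc -RCLike.re (A i i)
      ≤ RCLike.re (P i i) - RCLike.re (A i i) := by
        linarith [(RCLike.nonneg_iff.mp (hP.diag_nonneg (i := i))).1]
    _ = RCLike.re ((P - A) i i) := by simp
    _ ≤ ‖(P - A) i i‖ := RCLike.re_le_norm _
    _ ≤ ‖A - P‖ := norm_sub_rev P A ▸ norm_apply_le_l2_opNorm _ i i

theorem l2_opNorm_unitary_conj {U : Matrix n n 𝕜} (hU : U ∈ unitaryGroup n 𝕜)
    (A : Matrix n n 𝕜) : ‖U * A * star U‖ = ‖A‖ := by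
  rw [CStarRing.norm_mul_mem_unitary _ (Unitary.star_mem hU), CStarRing.norm_mem_unitary_mul _ hU]

end Matrix

theorem stmt_12_general {m : ℕ} (Θhat Θ : Matrix (Fin m) (Fin m) ℝ)
    (U : Matrix (Fin m) (Fin m) ℝ) (hU : U ∈ Matrix.orthogonalGroup (Fin m) ℝ)
    (lam : Fin m → ℝ) (hmono : Monotone lam)
    (hdecomp : Θhat = U * Matrix.diagonal lam * Uᵀ)
    (hm : 0 < m) (hneg : lam ⟨0, hm⟩ < 0)
    (hΘ : Θ.PosSemidef)
    (ε : ℝ) (heps : ε ≤ -lam ⟨0, hm⟩)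
    (Θplus : Matrix (Fin m) (Fin m) ℝ)
    (hplus : Θplus = U * Matrix.diagonal (fun i => max (lam i) ε) * Uᵀ) :
    opNorm (Θplus - Θ) ≤ 3 * opNorm (Θhat - Θ) := by
  change ‖Θplus - Θ‖ ≤ 3 * ‖Θhat - Θ‖
  set k : Fin m := ⟨0, hm⟩
  have hstar : star U = Uᵀ := by rw [star_eq_conjTranspose, conjTranspose_eq_transpose_of_trivial]
  rw [← hstar] at hdecomp hplus
  have hΘU : Θ = U * (star U * Θ * U) * star U := by
    rw [← mul_assoc, ← mul_assoc, Unitary.mul_star_self_of_mem hU, one_mul, mul_assoc,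
      Unitary.mul_star_self_of_mem hU, mul_one]
  have hlow : -lam k ≤ ‖Θhat - Θ‖ := by
    rw [hdecomp, hΘU, ← sub_mul, ← mul_sub, l2_opNorm_unitary_conj hU]
    have h := neg_re_apply_self_le_l2_opNorm_sub (A := diagonal lam)
      (hΘ.conjTranspose_mul_mul_same U) k
    rwa [diagonal_apply_eq, RCLike.re_to_real, ← star_eq_conjTranspose] at h
  have hup : ‖Θplus - Θhat‖ ≤ -2 * lam k := by
    rw [hplus, hdecomp, ← sub_mul, ← mul_sub, diagonal_sub, l2_opNorm_unitary_conj hU,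
      l2_opNorm_diagonal, pi_norm_le_iff_of_nonneg (by linarith)]
    intro i
    have hki : lam k ≤ lam i := hmono (Nat.zero_le _)
    rw [Real.norm_eq_abs, abs_of_nonneg (sub_nonneg.mpr (le_max_left _ _))]
    rcases max_cases (lam i) ε with ⟨h, _⟩ | ⟨h, _⟩ <;> rw [h] <;> linarith
  calc ‖Θplus - Θ‖ ≤ ‖Θplus - Θhat‖ + ‖Θhat - Θ‖ := norm_sub_le_norm_sub_add_norm_sub _ _ _
    _ ≤ 3 * ‖Θhat - Θ‖ := by linarith

/-- Projecting a symmetric matrix with smallest eigenvalue `λ₁ < 0` onto matrices with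
eigenvalues `≥ ε` (`0 < ε ≤ -λ₁`) at most triples the spectral-norm error to any
positive semidefinite matrix `Θ`. -/
theorem stmt_12 {m : ℕ} (Θhat Θ : Matrix (Fin m) (Fin m) ℝ)
    (U : Matrix (Fin m) (Fin m) ℝ) (hU : U ∈ Matrix.orthogonalGroup (Fin m) ℝ)
    (lam : Fin m → ℝ) (hmono : Monotone lam)
    (hdecomp : Θhat = U * Matrix.diagonal lam * Uᵀ)
    (hm : 0 < m) (hneg : lam ⟨0, hm⟩ < 0)
    (hΘ : Θ.PosSemidef)
    (ε : ℝ) (hε : 0 < ε) (heps : ε ≤ -lam ⟨0, hm⟩)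
    (Θplus : Matrix (Fin m) (Fin m) ℝ)
    (hplus : Θplus = U * Matrix.diagonal (fun i => max (lam i) ε) * Uᵀ) :
    opNorm (Θplus - Θ) ≤ 3 * opNorm (Θhat - Θ) :=
  stmt_12_general Θhat Θ U hU lam hmono hdecomp hm hneg hΘ ε heps Θplus hplus
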